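/- arXiv:0910.5084 — 2 statements merged into one kernel-verified Lean document; each statement's English description precedes it below -/
import Mathlib

section
/- The sine-type fundamental solution is antisymmetric in its two arguments: s(t₀,t) = −s(t,t₀) for all t, t₀ ∈ I. -/
/-!
For two solutions `f`, `g` of `u'' + κ u = 0` the Wronskian `f g' - f' g` has derivative
`f g'' - f'' g = -κ f g + κ f g = 0`, so it is constant on the interval. For `f = s(·,t₀)` and
`g = s(·,t)` the initial conditions make it equal to `-s(t₀,t)` at `t₀` and to `s(t,t₀)` at `t`.
-/

theorem Set.OrdConnected.eq_of_hasDerivAt_zero {E : Type*} [NormedAddCommGroup E]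
    [NormedSpace ℝ E] {I : Set ℝ} (hI : I.OrdConnected) {f : ℝ → E}
    (hf : ∀ x ∈ I, HasDerivAt f 0 x) {x y : ℝ} (hx : x ∈ I) (hy : y ∈ I) : f x = f y := by
  have h := hI.convex.norm_image_sub_le_of_norm_hasDerivWithin_le
    (fun z hz => (hf z hz).hasDerivWithinAt) (fun _ _ => norm_zero.le) hy hx
  rwa [zero_mul, norm_le_zero_iff, sub_eq_zero] at h

def wronskian (f f' g g' : ℝ → ℝ) (t : ℝ) : ℝ := f t * g' t - f' t * g t

theorem hasDerivAt_wronskian_zero {κ f f' g g' : ℝ → ℝ} {x : ℝ}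
    (hf : HasDerivAt f (f' x) x) (hf' : HasDerivAt f' (-(κ x * f x)) x)
    (hg : HasDerivAt g (g' x) x) (hg' : HasDerivAt g' (-(κ x * g x)) x) :
    HasDerivAt (wronskian f f' g g') 0 x :=
  ((hf.mul hg').sub (hf'.mul hg)).congr_deriv (by ring)

theorem stmt_2_general
    (I : Set ℝ) (hIconn : I.OrdConnected)
    (κ : ℝ → ℝ)
    (s s' : ℝ → ℝ → ℝ)
    (hsderiv : ∀ t₀ ∈ I, ∀ t ∈ I, HasDerivAt (fun u => s u t₀) (s' t t₀) t)
    (hsderiv2 : ∀ t₀ ∈ I, ∀ t ∈ I, HasDerivAt (fun u => s' u t₀) (-(κ t * s t t₀)) t)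
    (hsinit : ∀ t₀ ∈ I, s t₀ t₀ = 0) (hsinit' : ∀ t₀ ∈ I, s' t₀ t₀ = 1) :
    ∀ t ∈ I, ∀ t₀ ∈ I, s t₀ t = -s t t₀ := by
  intro t ht t₀ ht₀
  have hconst := hIconn.eq_of_hasDerivAt_zero
    (f := wronskian (s · t₀) (s' · t₀) (s · t) (s' · t))
    (fun u hu => hasDerivAt_wronskian_zero (hsderiv t₀ ht₀ u hu)
      (hsderiv2 t₀ ht₀ u hu) (hsderiv t ht u hu) (hsderiv2 t ht u hu)) ht₀ ht
  simp only [wronskian, hsinit t ht, hsinit' t ht, hsinit t₀ ht₀, hsinit' t₀ ht₀] at hconst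
  linarith

/-- The sine-type fundamental solution of the TDHO equation
`u'' + κ u = 0` on an open interval `I` is antisymmetric in its two arguments:
`s(t₀,t) = −s(t,t₀)` for all `t, t₀ ∈ I`. -/
theorem stmt_2
    (I : Set ℝ) (hIopen : IsOpen I) (hIconn : I.OrdConnected)
    (κ : ℝ → ℝ) (hκ : ContinuousOn κ I)
    (c s c' s' : ℝ → ℝ → ℝ)
    (hcderiv : ∀ t₀ ∈ I, ∀ t ∈ I, HasDerivAt (fun u => c u t₀) (c' t t₀) t)
    (hcderiv2 : ∀ t₀ ∈ I, ∀ t ∈ I, HasDerivAt (fun u => c' u t₀) (-(κ t * c t t₀)) t)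
    (hsderiv : ∀ t₀ ∈ I, ∀ t ∈ I, HasDerivAt (fun u => s u t₀) (s' t t₀) t)
    (hsderiv2 : ∀ t₀ ∈ I, ∀ t ∈ I, HasDerivAt (fun u => s' u t₀) (-(κ t * s t t₀)) t)
    (hcinit : ∀ t₀ ∈ I, c t₀ t₀ = 1) (hcinit' : ∀ t₀ ∈ I, c' t₀ t₀ = 0)
    (hsinit : ∀ t₀ ∈ I, s t₀ t₀ = 0) (hsinit' : ∀ t₀ ∈ I, s' t₀ t₀ = 1) :
    ∀ t ∈ I, ∀ t₀ ∈ I, s t₀ t = -s t t₀ :=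
  stmt_2_general I hIconn κ s s' hsderiv hsderiv2 hsinit hsinit'
end

section
/- For all t, t₀ ∈ I one has s(t,t₀)·∂ₜc(t,t₀) = c(t,t₀)·c(t₀,t) − 1. (This is the derivative identity ∂ₜc(t,t₀) = (c(t,t₀)c(t₀,t) − 1)/s(t,t₀) written without division, so that it is valid also at the zeros of s(·,t₀).) -/
/-!
The Wronskian `u v' - v u'` of two solutions `u, v` of `u'' + κ u = 0` is constant in `t`. For the pair
`c(·,t₀), s(·,t₀)` it equals its value `1` at `t₀`, so `s(t,t₀) ∂ₜc(t,t₀) = c(t,t₀) ∂ₜs(t,t₀) - 1`.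
For the pair `c(·,t), s(·,t₀)`, comparing the values at `t` and at `t₀` gives
`∂ₜs(t,t₀) = c(t₀,t)`.
-/

section Wronskian

variable {s : Set ℝ} {κ u v u' v' : ℝ → ℝ}

theorem hasDerivAt_wronskian {t : ℝ}
    (hu : HasDerivAt u (u' t) t) (hu' : HasDerivAt u' (-(κ t * u t)) t)
    (hv : HasDerivAt v (v' t) t) (hv' : HasDerivAt v' (-(κ t * v t)) t) :
    HasDerivAt (fun x => u x * v' x - v x * u' x) 0 t :=
  ((hu.mul hv').sub (hv.mul hu')).congr_deriv (by ring)

theorem Convex.wronskian_eq (hs : Convex ℝ s)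
    (hu : ∀ t ∈ s, HasDerivAt u (u' t) t) (hu' : ∀ t ∈ s, HasDerivAt u' (-(κ t * u t)) t)
    (hv : ∀ t ∈ s, HasDerivAt v (v' t) t) (hv' : ∀ t ∈ s, HasDerivAt v' (-(κ t * v t)) t)
    {x y : ℝ} (hx : x ∈ s) (hy : y ∈ s) :
    u x * v' x - v x * u' x = u y * v' y - v y * u' y := by
  have hW : ∀ t ∈ s, HasDerivWithinAt (fun x => u x * v' x - v x * u' x) 0 s t := fun t ht =>
    (hasDerivAt_wronskian (hu t ht) (hu' t ht) (hv t ht) (hv' t ht)).hasDerivWithinAt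
  have hle := hs.norm_image_sub_le_of_norm_hasDerivWithin_le (C := 0) hW (by simp) hy hx
  rw [zero_mul, norm_le_zero_iff, sub_eq_zero] at hle
  exact hle

end Wronskian

theorem stmt_3_general
    (I : Set ℝ) (hIconn : I.OrdConnected)
    (κ : ℝ → ℝ)
    (c s c' s' : ℝ → ℝ → ℝ)
    (hcderiv : ∀ t₀ ∈ I, ∀ t ∈ I, HasDerivAt (fun u => c u t₀) (c' t t₀) t)
    (hcderiv2 : ∀ t₀ ∈ I, ∀ t ∈ I, HasDerivAt (fun u => c' u t₀) (-(κ t * c t t₀)) t)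
    (hsderiv : ∀ t₀ ∈ I, ∀ t ∈ I, HasDerivAt (fun u => s u t₀) (s' t t₀) t)
    (hsderiv2 : ∀ t₀ ∈ I, ∀ t ∈ I, HasDerivAt (fun u => s' u t₀) (-(κ t * s t t₀)) t)
    (hcinit : ∀ t₀ ∈ I, c t₀ t₀ = 1) (hcinit' : ∀ t₀ ∈ I, c' t₀ t₀ = 0)
    (hsinit : ∀ t₀ ∈ I, s t₀ t₀ = 0) (hsinit' : ∀ t₀ ∈ I, s' t₀ t₀ = 1) :
    ∀ t ∈ I, ∀ t₀ ∈ I, s t t₀ * c' t t₀ = c t t₀ * c t₀ t - 1 := by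
  intro t ht t₀ ht₀
  have hW₀ : c t t₀ * s' t t₀ - s t t₀ * c' t t₀ = 1 := by
    have := hIconn.convex.wronskian_eq (hcderiv t₀ ht₀) (hcderiv2 t₀ ht₀)
      (hsderiv t₀ ht₀) (hsderiv2 t₀ ht₀) ht ht₀
    simpa [hcinit t₀ ht₀, hcinit' t₀ ht₀, hsinit t₀ ht₀, hsinit' t₀ ht₀] using this
  have hs' : s' t t₀ = c t₀ t := by
    have := hIconn.convex.wronskian_eq (hcderiv t ht) (hcderiv2 t ht)
      (hsderiv t₀ ht₀) (hsderiv2 t₀ ht₀) ht ht₀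
    simpa [hcinit t ht, hcinit' t ht, hsinit t₀ ht₀, hsinit' t₀ ht₀] using this
  rw [← hs']
  linarith

/-- For the fundamental solutions of the TDHO equation
`u'' + κ u = 0` on an open interval `I`, one has
`s(t,t₀)·∂ₜc(t,t₀) = c(t,t₀)·c(t₀,t) − 1` for all `t, t₀ ∈ I`
(the derivative identity for `∂ₜc` written without division, valid also at the
zeros of `s(·,t₀)`). -/
theorem stmt_3
    (I : Set ℝ) (hIopen : IsOpen I) (hIconn : I.OrdConnected)
    (κ : ℝ → ℝ) (hκ : ContinuousOn κ I)
    (c s c' s' : ℝ → ℝ → ℝ)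
    (hcderiv : ∀ t₀ ∈ I, ∀ t ∈ I, HasDerivAt (fun u => c u t₀) (c' t t₀) t)
    (hcderiv2 : ∀ t₀ ∈ I, ∀ t ∈ I, HasDerivAt (fun u => c' u t₀) (-(κ t * c t t₀)) t)
    (hsderiv : ∀ t₀ ∈ I, ∀ t ∈ I, HasDerivAt (fun u => s u t₀) (s' t t₀) t)
    (hsderiv2 : ∀ t₀ ∈ I, ∀ t ∈ I, HasDerivAt (fun u => s' u t₀) (-(κ t * s t t₀)) t)
    (hcinit : ∀ t₀ ∈ I, c t₀ t₀ = 1) (hcinit' : ∀ t₀ ∈ I, c' t₀ t₀ = 0)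
    (hsinit : ∀ t₀ ∈ I, s t₀ t₀ = 0) (hsinit' : ∀ t₀ ∈ I, s' t₀ t₀ = 1) :
    ∀ t ∈ I, ∀ t₀ ∈ I, s t t₀ * c' t t₀ = c t t₀ * c t₀ t - 1 :=
  stmt_3_general I hIconn κ c s c' s' hcderiv hcderiv2 hsderiv hsderiv2 hcinit hcinit' hsinit
    hsinit'
end
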